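/- arXiv:1910.12289 — 2 statements merged into one kernel-verified Lean document; each statement's English description precedes it below -/
import Mathlib

section
/- Let λ > 1 be a real number, N ≥ 1 an integer, β_0 < β_1 < ⋯ < β_N real numbers, and c_0, …, c_N ∈ ℂ, and let φ : ℝ → ℂ be a continuous, compactly supported, not identically zero solution of the two-scale difference equation. If φ is Hölder continuous with exponent μ > 0, then λ^μ·|c_0| ≤ 1 and λ^μ·|c_N| ≤ 1 (equivalently, μ ≤ min(−ln|c_0|, −ln|c_N|)/ln λ when c_0 and c_N are nonzero). -/
/-!
Let `a` be the left end of the support of `φ`. Near `a` only the term with the smallest shift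
`β i` survives in the two-scale equation; this forces `λ a - β i = a` and then
`φ (a + s) = c i * φ (a + λ s)` for small `s`, hence `φ (a + t / λ ^ n) = c i ^ n * φ (a + t)`.
Hölder continuity at `a` bounds the left side by `M (t / λ ^ n) ^ μ`, so
`(λ ^ μ ‖c i‖) ^ n ‖φ (a + t)‖ ≤ M t ^ μ` for all `n`. If `λ ^ μ ‖c i‖ > 1`, `φ` would vanish on a
neighbourhood of `a`, which is impossible. The right end follows by applying this to
`x ↦ φ (-x)`, a solution with shifts `-β`.
-/

open MeasureTheory Filter Set

theorem eqOn_Iic_zero_iff_le_of_isLeast_tsupport {E : Type*} [TopologicalSpace E] [T2Space E]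
    [Zero E] {φ : ℝ → E} {a b : ℝ} (hcont : Continuous φ) (ha : IsLeast (tsupport φ) a) :
    EqOn φ 0 (Iic b) ↔ b ≤ a := by
  constructor
  · intro h
    have hsupp : Function.support φ ⊆ Ioi b :=
      Function.support_subset_iff'.2 fun x hx ↦ h (mem_Iic.2 (not_lt.1 hx))
    simpa using closure_mono hsupp ha.1
  · intro hba
    have hlt : EqOn φ 0 (Iio a) := fun x hx ↦
      image_eq_zero_of_notMem_tsupport fun hx' ↦ (not_le.2 hx) (ha.2 hx')
    have hle := hlt.closure hcont continuous_const
    rw [closure_Iio] at hle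
    exact hle.mono (Iic_subset_Iic.2 hba)

theorem exists_pos_add_le_of_forall_ne_lt {ι : Type*} [Finite ι] {β : ι → ℝ} {i : ι}
    (hi : ∀ k ≠ i, β i < β k) : ∃ δ > 0, ∀ k ≠ i, β i + δ ≤ β k := by
  have hδ : ∀ᶠ δ in nhdsWithin (0 : ℝ) (Ioi 0), ∀ k, k ≠ i → β i + δ ≤ β k := by
    refine eventually_all.2 fun k ↦ ?_
    by_cases hk : k = i
    · exact Eventually.of_forall fun _ h ↦ absurd hk h
    · filter_upwards [nhdsWithin_le_nhds (eventually_le_nhds (sub_pos.2 (hi k hk)))] with δ hδ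
      exact fun _ ↦ by linarith
  obtain ⟨δ, hgap, hpos⟩ := (hδ.and self_mem_nhdsWithin).exists
  exact ⟨δ, hpos, hgap⟩

theorem eq_zero_of_forall_pow_mul_le {q r C : ℝ} (hq : 1 < q) (hr : 0 ≤ r)
    (h : ∀ n : ℕ, q ^ n * r ≤ C) : r = 0 := by
  by_contra hne
  obtain ⟨n, hn⟩ := pow_unbounded_of_one_lt (C / r) hq
  have := h n
  rw [div_lt_iff₀ (lt_of_le_of_ne hr (Ne.symm hne))] at hn
  linarith

variable {𝕜 : Type*} [NormedDivisionRing 𝕜]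

theorem apply_div_pow_eq_pow_mul {f : ℝ → 𝕜} {c : 𝕜} {lam δ t : ℝ} (hlam : 1 ≤ lam)
    (hf : ∀ s, lam * s ≤ δ → f s = c * f (lam * s)) (ht₀ : 0 ≤ t) (htδ : t ≤ δ) (n : ℕ) :
    f (t / lam ^ n) = c ^ n * f t := by
  induction n with
  | zero => simp
  | succ n ih =>
    have hmul : lam * (t / lam ^ (n + 1)) = t / lam ^ n := by
      rw [pow_succ]; field_simp
    have hle : t / lam ^ n ≤ δ := (div_le_self ht₀ (one_le_pow₀ hlam)).trans htδ
    rw [hf _ (hmul ▸ hle), hmul, ih, pow_succ', mul_assoc]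

theorem eq_zero_of_iterate_of_holder {f : ℝ → 𝕜} {c : 𝕜} {lam μ M t : ℝ} (hlam : 0 < lam)
    (ht : 0 ≤ t) (hq : 1 < lam ^ μ * ‖c‖) (hf : ∀ n : ℕ, f (t / lam ^ n) = c ^ n * f t)
    (hH : ∀ x, ‖f x‖ ≤ M * |x| ^ μ) : f t = 0 := by
  refine norm_eq_zero.1
    (eq_zero_of_forall_pow_mul_le (C := M * t ^ μ) hq (norm_nonneg _) fun n ↦ ?_)
  have hpow : 0 < (lam ^ μ) ^ n := by positivity
  have hscale : |t / lam ^ n| ^ μ = t ^ μ / (lam ^ μ) ^ n := by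
    rw [abs_of_nonneg (by positivity), Real.div_rpow ht (by positivity),
      Real.rpow_pow_comm hlam.le]
  calc (lam ^ μ * ‖c‖) ^ n * ‖f t‖ = (lam ^ μ) ^ n * ‖f (t / lam ^ n)‖ := by
        rw [hf, norm_mul, norm_pow, mul_pow, mul_assoc]
    _ ≤ (lam ^ μ) ^ n * (M * (t ^ μ / (lam ^ μ) ^ n)) := by
        rw [← hscale]; exact mul_le_mul_of_nonneg_left (hH _) hpow.le
    _ = M * t ^ μ := by field_simp

variable {ι : Type*} [Fintype ι]

def IsTwoScaleSolution (lam : ℝ) (β : ι → ℝ) (c : ι → 𝕜) (φ : ℝ → 𝕜) : Prop :=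
  ∀ x, φ x = ∑ k, c k * φ (lam * x - β k)

namespace IsTwoScaleSolution

variable {lam : ℝ} {β : ι → ℝ} {c : ι → 𝕜} {φ : ℝ → 𝕜} {a δ : ℝ} {i : ι}

theorem of_ae (hcont : Continuous φ) (heq : ∀ᵐ x : ℝ, φ x = ∑ k, c k * φ (lam * x - β k)) :
    IsTwoScaleSolution lam β c φ :=
  congrFun ((hcont.ae_eq_iff_eq volume (by fun_prop)).1 heq)

theorem comp_neg (hφ : IsTwoScaleSolution lam β c φ) :
    IsTwoScaleSolution lam (-β) c (fun x ↦ φ (-x)) := by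
  intro x
  simp only [hφ (-x), Pi.neg_apply, sub_neg_eq_add, mul_neg, neg_add']

theorem eq_mul_of_eqOn_Iic_zero (hφ : IsTwoScaleSolution lam β c φ) (h0 : EqOn φ 0 (Iic a))
    (hgap : ∀ k ≠ i, β i + δ ≤ β k) {x : ℝ} (hx : lam * x - β i ≤ a + δ) :
    φ x = c i * φ (lam * x - β i) := by
  rw [hφ x, Finset.sum_eq_single i (fun k _ hk ↦ ?_) (by simp)]
  rw [h0 (show lam * x - β k ≤ a by linarith [hgap k hk]), Pi.zero_apply, mul_zero]

theorem mul_sub_eq_of_isLeast_tsupport (hφ : IsTwoScaleSolution lam β c φ) (hcont : Continuous φ)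
    (ha : IsLeast (tsupport φ) a) (hlam : 0 < lam) (hc : c i ≠ 0) (hδ : 0 < δ)
    (hgap : ∀ k ≠ i, β i + δ ≤ β k) : lam * a - β i = a := by
  have hedge := fun b ↦ eqOn_Iic_zero_iff_le_of_isLeast_tsupport (b := b) hcont ha
  have h0 : EqOn φ 0 (Iic a) := (hedge a).2 le_rfl
  apply le_antisymm
  · by_contra! hlt
    suffices EqOn φ 0 (Iic (min (a + δ) (lam * a - β i))) from
      absurd ((hedge _).1 this) (not_le.2 (lt_min (by linarith) hlt))
    intro y hy
    have hy' : y ≤ lam * a - β i := hy.trans (min_le_right _ _)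
    have hx : lam * ((y + β i) / lam) - β i = y := by field_simp; ring
    have := hφ.eq_mul_of_eqOn_Iic_zero h0 hgap (hx.le.trans (hy.trans (min_le_left _ _)))
    rw [hx, h0 (show (y + β i) / lam ≤ a by rw [div_le_iff₀ hlam]; linarith)] at this
    exact (mul_eq_zero.1 this.symm).resolve_left hc
  · by_contra! hlt
    suffices EqOn φ 0 (Iic ((a + β i) / lam)) from
      absurd ((hedge _).1 this) (not_le.2 (by rw [lt_div_iff₀ hlam]; linarith))
    intro x hx
    have hx' : lam * x - β i ≤ a := by
      have := (le_div_iff₀' hlam).1 hx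
      linarith
    simp only [hφ.eq_mul_of_eqOn_Iic_zero h0 hgap (by linarith), h0 hx', Pi.zero_apply, mul_zero]

theorem rpow_mul_norm_le_one (hφ : IsTwoScaleSolution lam β c φ) (hlam : 1 < lam)
    (hcont : Continuous φ) (hsupp : HasCompactSupport φ) (hne : φ ≠ 0)
    (hi : ∀ k ≠ i, β i < β k) {μ M : ℝ} (hH : ∀ x y, ‖φ x - φ y‖ ≤ M * |x - y| ^ μ) :
    lam ^ μ * ‖c i‖ ≤ 1 := by
  by_contra! hq
  have hc : c i ≠ 0 := fun hc ↦ by norm_num [hc] at hq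
  obtain ⟨a, ha⟩ := hsupp.isCompact.exists_isLeast
    (nonempty_iff_ne_empty.2 (tsupport_eq_empty_iff.not.2 hne))
  obtain ⟨δ, hδ, hgap⟩ := exists_pos_add_le_of_forall_ne_lt hi
  have hedge := fun b ↦ eqOn_Iic_zero_iff_le_of_isLeast_tsupport (b := b) hcont ha
  have h0 : EqOn φ 0 (Iic a) := (hedge a).2 le_rfl
  have hfix := hφ.mul_sub_eq_of_isLeast_tsupport hcont ha (by linarith) hc hδ hgap
  have hself : ∀ s, lam * s ≤ δ → φ (a + s) = c i * φ (a + lam * s) := fun s hs ↦ by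
    rw [hφ.eq_mul_of_eqOn_Iic_zero h0 hgap (by linarith)]
    congr 2
    linarith
  suffices EqOn φ 0 (Iic (a + δ)) by linarith [(hedge _).1 this]
  intro x hx
  rcases le_total x a with hxa | hxa
  · exact h0 hxa
  · have hiter := apply_div_pow_eq_pow_mul (f := fun s ↦ φ (a + s)) hlam.le hself
      (sub_nonneg.2 hxa) (by linarith [mem_Iic.1 hx])
    have := eq_zero_of_iterate_of_holder (by linarith) (sub_nonneg.2 hxa) hq hiter
      fun s ↦ by simpa [h0 (le_refl a)] using hH (a + s) a
    simpa using this

end IsTwoScaleSolution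

theorem two_scale_holder_regularity_bound_general (lam : ℝ) (hlam : 1 < lam) (N : ℕ)
    (β : Fin (N + 1) → ℝ) (hβ : StrictMono β) (c : Fin (N + 1) → ℂ)
    (φ : ℝ → ℂ) (hcont : Continuous φ) (hsupp : HasCompactSupport φ)
    (hne : φ ≠ 0)
    (heq : ∀ᵐ x : ℝ, φ x = ∑ k : Fin (N + 1), c k * φ (lam * x - β k))
    (μ : ℝ)
    (hHolder : ∃ M > (0 : ℝ), ∀ x y : ℝ, ‖φ x - φ y‖ ≤ M * |x - y| ^ μ) :
    lam ^ μ * ‖c 0‖ ≤ 1 ∧ lam ^ μ * ‖c (Fin.last N)‖ ≤ 1 := by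
  obtain ⟨M, -, hH⟩ := hHolder
  have hφ : IsTwoScaleSolution lam β c φ := .of_ae hcont heq
  refine ⟨hφ.rpow_mul_norm_le_one hlam hcont hsupp hne
    (fun k hk ↦ hβ (Fin.pos_iff_ne_zero.2 hk)) hH, ?_⟩
  refine hφ.comp_neg.rpow_mul_norm_le_one (M := M) hlam (hcont.comp continuous_neg)
    (hsupp.comp_homeomorph (Homeomorph.neg ℝ)) ?_
    (fun k hk ↦ neg_lt_neg (hβ (Fin.lt_last_iff_ne_last.2 hk))) fun x y ↦ ?_
  · exact fun h ↦ hne (funext fun x ↦ by simpa using congrFun h (-x))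
  · simpa only [neg_sub_neg, abs_sub_comm y x] using hH (-x) (-y)

/-- If `φ` is a continuous, compactly supported, not identically zero solution of the
two-scale difference equation which is Hölder continuous with exponent `μ > 0`, then
`λ^μ * |c 0| ≤ 1` and `λ^μ * |c N| ≤ 1`. -/
theorem two_scale_holder_regularity_bound (lam : ℝ) (hlam : 1 < lam) (N : ℕ) (hN : 1 ≤ N)
    (β : Fin (N + 1) → ℝ) (hβ : StrictMono β) (c : Fin (N + 1) → ℂ)
    (φ : ℝ → ℂ) (hcont : Continuous φ) (hsupp : HasCompactSupport φ)
    (hne : φ ≠ 0)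
    (heq : ∀ᵐ x : ℝ, φ x = ∑ k : Fin (N + 1), c k * φ (lam * x - β k))
    (μ : ℝ) (hμ : 0 < μ)
    (hHolder : ∃ M > (0 : ℝ), ∀ x y : ℝ, ‖φ x - φ y‖ ≤ M * |x - y| ^ μ) :
    lam ^ μ * ‖c 0‖ ≤ 1 ∧ lam ^ μ * ‖c (Fin.last N)‖ ≤ 1 :=
  two_scale_holder_regularity_bound_general lam hlam N β hβ c φ hcont hsupp hne heq μ hHolder
end

section
/- Let β_0 < β_1 be real numbers and c_0, c_1 ∈ ℂ. If φ : ℝ → ℂ is integrable, compactly supported, essentially bounded, not almost everywhere zero, and satisfies φ(x) = c_0 φ(2x − β_0) + c_1 φ(2x − β_1) for almost every x ∈ ℝ, then c_0 = 1 and c_1 = 1. -/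
/-!
Let `Φ x = ∫_{-∞}^x φ`. The equation for `φ` first forces `φ` to vanish outside `[β₀, β₁]`
(an a.e. support `[β₀ - r, β₁ + r]` shrinks to `[β₀ - r/2, β₁ + r/2]`), and integrating it gives
`Φ x = c₀/2 Φ(2x - β₀) + c₁/2 Φ(2x - β₁)`, with `Φ = 0` left of `β₀`, `Φ = ∫ φ` right of `β₁`,
and `Φ` Lipschitz because `φ` is essentially bounded. Near `β₀` only the first term survives,
so `Φ(β₀ + t/2ⁿ) = (c₀/2)ⁿ Φ(β₀ + t)`; the Lipschitz bound `‖Φ(β₀ + t/2ⁿ)‖ ≤ K t / 2ⁿ` then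
forces `Φ = 0` unless `‖c₀‖ ≤ 1`, and the reflection `x ↦ ∫ φ - Φ(-x)` gives `‖c₁‖ ≤ 1`.
If `∫ φ = 0`, then `Φ` vanishes outside `[β₀, β₁]` and `‖Φ x‖ ≤ ½ ‖Φ y‖` for some `y`, so
`sup ‖Φ‖ ≤ ½ sup ‖Φ‖` and `Φ = 0`. Hence `∫ φ ≠ 0`, and evaluating the equation for `Φ` at `β₁`
gives `c₀ + c₁ = 2`; by strict convexity of the unit disc, `c₀ = c₁ = 1`.
-/

open MeasureTheory Filter Set Topology

theorem nonpos_of_forall_pow_mul_le {r a L : ℝ} (hr : 1 < r) (h : ∀ n : ℕ, r ^ n * a ≤ L) :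
    a ≤ 0 := by
  by_contra! ha
  obtain ⟨n, hn⟩ := pow_unbounded_of_one_lt (L / a) hr
  rw [div_lt_iff₀ ha] at hn
  linarith [h n]

theorem eq_zero_of_forall_norm_le_mul_norm {α E : Type*} [Nonempty α] [NormedAddCommGroup E]
    {F : α → E} (hF : BddAbove (range fun x => ‖F x‖)) {r : ℝ} (hr₀ : 0 ≤ r) (hr : r < 1)
    (h : ∀ x, ∃ y, ‖F x‖ ≤ r * ‖F y‖) : F = 0 := by
  set S := ⨆ x, ‖F x‖
  have hS : ∀ x, ‖F x‖ ≤ r * S := fun x => by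
    obtain ⟨y, hy⟩ := h x
    exact hy.trans (mul_le_mul_of_nonneg_left (le_ciSup hF y) hr₀)
  have hS₀ : S ≤ r * S := ciSup_le hS
  funext x
  have := (norm_nonneg (F x)).trans (le_ciSup hF x)
  exact norm_le_zero_iff.1 (by nlinarith [hS x])

theorem eq_of_norm_le_of_add_eq_two_smul {E : Type*} [NormedAddCommGroup E] [NormedSpace ℝ E]
    [StrictConvexSpace ℝ E] {x y z : E} (hx : ‖x‖ ≤ ‖z‖) (hy : ‖y‖ ≤ ‖z‖)
    (h : x + y = (2 : ℝ) • z) : x = z ∧ y = z := by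
  have hsum : ‖x + y‖ = 2 * ‖z‖ := by rw [h, norm_smul, Real.norm_two]
  have hxz : ‖x‖ = ‖z‖ := by linarith [norm_add_le x y]
  have hyz : ‖y‖ = ‖z‖ := by linarith [norm_add_le x y]
  have hxy : x = y := eq_of_norm_eq_of_norm_add_eq (hxz.trans hyz.symm) (by linarith)
  subst hxy
  have h2 : (2 : ℝ) • x = (2 : ℝ) • z := by rw [two_smul]; exact h
  have hx_eq : x = z := smul_right_injective E two_ne_zero h2
  exact ⟨hx_eq, hx_eq⟩

section Contraction

variable {f : ℝ → ℂ} {c : ℂ} {s K : ℝ}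

theorem apply_div_two_pow_eq (hrel : ∀ t, 0 ≤ t → t ≤ s / 2 → f t = c / 2 * f (2 * t))
    (n : ℕ) {t : ℝ} (ht₀ : 0 ≤ t) (hts : t ≤ s) : f (t / 2 ^ n) = (c / 2) ^ n * f t := by
  induction n with
  | zero => simp
  | succ n ih =>
    have hle : t / 2 ^ (n + 1) ≤ s / 2 := by
      rw [pow_succ, ← div_div]
      gcongr
      exact (div_le_self ht₀ (one_le_pow₀ one_le_two)).trans hts
    rw [hrel _ (by positivity) hle, show 2 * (t / 2 ^ (n + 1)) = t / 2 ^ n by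
      rw [pow_succ]; field_simp, ih, pow_succ]
    ring

theorem eq_zero_of_eq_mul_apply_two_mul (hc : 1 < ‖c‖)
    (hrel : ∀ t, 0 ≤ t → t ≤ s / 2 → f t = c / 2 * f (2 * t))
    (hbd : ∀ t, 0 ≤ t → ‖f t‖ ≤ K * t) {t : ℝ} (ht₀ : 0 ≤ t) (hts : t ≤ s) : f t = 0 := by
  refine norm_le_zero_iff.1 (nonpos_of_forall_pow_mul_le (L := K * t) hc fun n => ?_)
  have h2n : (0 : ℝ) < 2 ^ n := by positivity
  have hn := hbd (t / 2 ^ n) (by positivity)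
  rw [apply_div_two_pow_eq hrel n ht₀ hts, norm_mul, norm_pow, norm_div, Complex.norm_two,
    div_pow] at hn
  calc ‖c‖ ^ n * ‖f t‖ = ‖c‖ ^ n / 2 ^ n * ‖f t‖ * 2 ^ n := by field_simp
    _ ≤ K * (t / 2 ^ n) * 2 ^ n := by gcongr
    _ = K * t := by field_simp

end Contraction

theorem quasiMeasurePreserving_mul_sub {a : ℝ} (ha : a ≠ 0) (b : ℝ) :
    Measure.QuasiMeasurePreserving (fun x : ℝ => a * x - b) volume volume :=
  (measurePreserving_sub_right volume b).quasiMeasurePreserving.comp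
    (Measure.quasiMeasurePreserving_smul ha (μ := volume))

section Support

variable {β₀ β₁ : ℝ} {c₀ c₁ : ℂ} {φ : ℝ → ℂ}

theorem ae_eq_zero_of_notMem_Icc_half (hβ : β₀ ≤ β₁)
    (heq : ∀ᵐ x : ℝ, φ x = c₀ * φ (2 * x - β₀) + c₁ * φ (2 * x - β₁)) {r : ℝ}
    (h : ∀ᵐ x : ℝ, x ∉ Icc (β₀ - r) (β₁ + r) → φ x = 0) :
    ∀ᵐ x : ℝ, x ∉ Icc (β₀ - r / 2) (β₁ + r / 2) → φ x = 0 := by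
  filter_upwards [heq, (quasiMeasurePreserving_mul_sub two_ne_zero β₀).ae h,
    (quasiMeasurePreserving_mul_sub two_ne_zero β₁).ae h] with x hx h₀ h₁ hout
  simp only [mem_Icc, not_and_or, not_le] at hout h₀ h₁
  rw [hx, h₀ (by rcases hout with h | h <;> [left; right] <;> linarith),
    h₁ (by rcases hout with h | h <;> [left; right] <;> linarith), mul_zero, mul_zero, add_zero]

theorem ae_eq_zero_of_notMem_Icc (hβ : β₀ ≤ β₁)
    (heq : ∀ᵐ x : ℝ, φ x = c₀ * φ (2 * x - β₀) + c₁ * φ (2 * x - β₁))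
    (hsupp : ∃ R : ℝ, ∀ᵐ x : ℝ, R < |x| → φ x = 0) :
    ∀ᵐ x : ℝ, x ∉ Icc β₀ β₁ → φ x = 0 := by
  obtain ⟨R, hR⟩ := hsupp
  set r := |R| + |β₀| + |β₁|
  have hr : ∀ n : ℕ, ∀ᵐ x : ℝ, x ∉ Icc (β₀ - r / 2 ^ n) (β₁ + r / 2 ^ n) → φ x = 0 := by
    intro n
    induction n with
    | zero =>
      filter_upwards [hR] with x hx hout
      simp only [pow_zero, div_one, mem_Icc, not_and_or, not_le] at hout
      refine hx ?_
      rcases hout with h | h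
      · linarith [neg_abs_le x, le_abs_self R, le_abs_self β₀, abs_nonneg β₁]
      · linarith [le_abs_self x, le_abs_self R, abs_nonneg β₀, neg_abs_le β₁]
    | succ n ih => simpa only [pow_succ, div_div] using ae_eq_zero_of_notMem_Icc_half hβ heq ih
  have hlim : Tendsto (fun n : ℕ => r / 2 ^ n) atTop (𝓝 0) := by
    simpa only [div_eq_mul_inv, ← inv_pow, mul_zero] using
      (tendsto_pow_atTop_nhds_zero_of_lt_one (by norm_num) (by norm_num : (2 : ℝ)⁻¹ < 1)).const_mul
        r
  filter_upwards [ae_all_iff.2 hr] with x hx hout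
  by_contra hφ
  have hmem : ∀ n : ℕ, x ∈ Icc (β₀ - r / 2 ^ n) (β₁ + r / 2 ^ n) := fun n =>
    not_imp_comm.1 (hx n) hφ
  refine hout ⟨?_, ?_⟩
  · simpa using le_of_tendsto' (tendsto_const_nhds.sub hlim) fun n => (hmem n).1
  · simpa using ge_of_tendsto' (tendsto_const_nhds.add hlim) fun n => (hmem n).2

end Support

theorem MeasureTheory.MemLp.ae_norm_le_toNNReal_eLpNorm_top {α F : Type*} {m : MeasurableSpace α}
    {μ : Measure α} [NormedAddCommGroup F] {f : α → F} (hf : MemLp f ⊤ μ) :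
    ∀ᵐ x ∂μ, ‖f x‖ ≤ (eLpNorm f ⊤ μ).toNNReal := by
  filter_upwards [ae_le_eLpNormEssSup (f := f) (μ := μ)] with x hx
  rw [← eLpNorm_exponent_top] at hx
  exact_mod_cast ENNReal.toNNReal_mono hf.2.ne hx

section Primitive

variable {E : Type*} [NormedAddCommGroup E] [NormedSpace ℝ E]

theorem integral_Iic_comp_mul_sub (g : ℝ → E) {a : ℝ} (ha : 0 < a) (b x : ℝ) :
    ∫ t in Iic x, g (a * t - b) = a⁻¹ • ∫ u in Iic (a * x - b), g u := by
  have hiff (t : ℝ) : a * t - b ≤ a * x - b ↔ t ≤ x := by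
    rw [sub_le_sub_iff_right, mul_le_mul_iff_right₀ ha]
  calc ∫ t in Iic x, g (a * t - b)
      = ∫ t, (Iic (a * x - b)).indicator g (a * t - b) := by
        rw [← integral_indicator measurableSet_Iic]
        simp only [indicator_apply, mem_Iic, hiff]
    _ = |a⁻¹| • ∫ u, (Iic (a * x - b)).indicator g (u - b) :=
        Measure.integral_comp_mul_left (fun u => (Iic (a * x - b)).indicator g (u - b)) a
    _ = a⁻¹ • ∫ u in Iic (a * x - b), g u := by
        rw [integral_sub_right_eq_self, integral_indicator measurableSet_Iic,
          abs_of_pos (inv_pos.2 ha)]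

variable {f : ℝ → E} {a b : ℝ}

theorem integral_Iic_eq_zero_of_le (hf : ∀ᵐ x : ℝ, x ∉ Icc a b → f x = 0) {y : ℝ} (hy : y ≤ a) :
    ∫ t in Iic y, f t = 0 := by
  rw [integral_Iic_eq_integral_Iio]
  refine setIntegral_eq_zero_of_ae_eq_zero ?_
  filter_upwards [hf] with x hx hxy
  exact hx fun hmem => (mem_Iio.1 hxy).not_ge (hy.trans hmem.1)

theorem integral_Iic_eq_integral_of_ge (hf : ∀ᵐ x : ℝ, x ∉ Icc a b → f x = 0) {y : ℝ}
    (hy : b ≤ y) : ∫ t in Iic y, f t = ∫ t, f t := by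
  refine setIntegral_eq_integral_of_ae_compl_eq_zero ?_
  filter_upwards [hf] with x hx hxy
  exact hx fun hmem => hxy (hmem.2.trans hy)

theorem lipschitzWith_integral_Iic (hf : Integrable f) {K : NNReal} (hK : ∀ᵐ x : ℝ, ‖f x‖ ≤ K) :
    LipschitzWith K fun x => ∫ t in Iic x, f t := by
  refine LipschitzWith.of_dist_le_mul fun x y => ?_
  rw [dist_eq_norm, intervalIntegral.integral_Iic_sub_Iic hf.integrableOn hf.integrableOn,
    Real.dist_eq]
  exact intervalIntegral.norm_integral_le_of_norm_le_const_ae (hK.mono fun x hx _ => hx)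

theorem ae_eq_zero_of_forall_integral_Iic_eq_zero [CompleteSpace E] (hf : Integrable f)
    (h : ∀ x, ∫ t in Iic x, f t = 0) : f =ᵐ[volume] 0 := by
  have hzero : (fun x => ∫ t in (0 : ℝ)..x, f t) = fun _ => 0 := funext fun x => by
    rw [← intervalIntegral.integral_Iic_sub_Iic hf.integrableOn hf.integrableOn, h, h, sub_zero]
  filter_upwards [LocallyIntegrable.ae_hasDerivAt_integral hf.locallyIntegrable] with x hx
  have h0 := hx 0
  rw [hzero] at h0
  exact h0.unique (hasDerivAt_const x 0)

end Primitive

theorem integral_Iic_twoScale {β₀ β₁ : ℝ} {c₀ c₁ : ℂ} {φ : ℝ → ℂ} (hφ : Integrable φ)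
    (heq : ∀ᵐ x : ℝ, φ x = c₀ * φ (2 * x - β₀) + c₁ * φ (2 * x - β₁)) (x : ℝ) :
    ∫ t in Iic x, φ t = c₀ / 2 * (∫ t in Iic (2 * x - β₀), φ t)
      + c₁ / 2 * ∫ t in Iic (2 * x - β₁), φ t := by
  have hcomp (β : ℝ) : Integrable fun t : ℝ => φ (2 * t - β) := by
    simpa using (hφ.comp_sub_right β).comp_mul_left' two_ne_zero
  rw [setIntegral_congr_ae measurableSet_Iic (heq.mono fun x hx _ => hx),
    integral_add ((hcomp β₀).const_mul c₀).integrableOn ((hcomp β₁).const_mul c₁).integrableOn,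
    integral_const_mul, integral_const_mul, integral_Iic_comp_mul_sub φ two_pos β₀ x,
    integral_Iic_comp_mul_sub φ two_pos β₁ x, Complex.real_smul, Complex.real_smul]
  push_cast
  ring

/-- The properties of `x ↦ ∫_{-∞}^x φ` for a solution `φ` vanishing a.e. outside `[β₀, β₁]`. -/
structure IsTwoScalePrimitive (β₀ β₁ : ℝ) (c₀ c₁ : ℂ) (F : ℝ → ℂ) : Prop where
  eq_zero_of_le : ∀ x ≤ β₀, F x = 0
  eq_of_ge : ∀ x, β₁ ≤ x → F x = F β₁
  twoScale : ∀ x, F x = c₀ / 2 * F (2 * x - β₀) + c₁ / 2 * F (2 * x - β₁)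

namespace IsTwoScalePrimitive

variable {β₀ β₁ : ℝ} {c₀ c₁ : ℂ} {F : ℝ → ℂ}

theorem eq_zero_of_eqOn_Icc (hF : IsTwoScalePrimitive β₀ β₁ c₀ c₁ F) (hβ : β₀ ≤ β₁)
    (h : EqOn F 0 (Icc β₀ β₁)) : F = 0 := by
  funext x
  rcases le_or_gt x β₀ with hx | hx
  · exact hF.eq_zero_of_le x hx
  rcases le_or_gt x β₁ with hx' | hx'
  · exact h ⟨hx.le, hx'⟩
  · exact (hF.eq_of_ge x hx'.le).trans (h ⟨hβ, le_rfl⟩)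

theorem apply_eq_of_le_midpoint (hF : IsTwoScalePrimitive β₀ β₁ c₀ c₁ F) {x : ℝ}
    (hx : x ≤ (β₀ + β₁) / 2) : F x = c₀ / 2 * F (2 * x - β₀) := by
  rw [hF.twoScale x, hF.eq_zero_of_le (2 * x - β₁) (by linarith), mul_zero, add_zero]

theorem apply_right_eq (hF : IsTwoScalePrimitive β₀ β₁ c₀ c₁ F) (hβ : β₀ ≤ β₁) :
    F β₁ = (c₀ + c₁) / 2 * F β₁ := by
  have h := hF.twoScale β₁
  rw [hF.eq_of_ge (2 * β₁ - β₀) (by linarith), show 2 * β₁ - β₁ = β₁ by ring] at h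
  linear_combination h

theorem reflect (hF : IsTwoScalePrimitive β₀ β₁ c₀ c₁ F) (hβ : β₀ ≤ β₁) :
    IsTwoScalePrimitive (-β₁) (-β₀) c₁ c₀ fun x => F β₁ - F (-x) where
  eq_zero_of_le x hx := by rw [hF.eq_of_ge (-x) (by linarith), sub_self]
  eq_of_ge x hx := by rw [neg_neg, hF.eq_zero_of_le (-x) (by linarith), hF.eq_zero_of_le β₀ le_rfl]
  twoScale x := by
    have h := hF.twoScale (-x)
    have hI := hF.apply_right_eq hβ
    rw [show 2 * x - -β₁ = -(2 * -x - β₁) by ring, show 2 * x - -β₀ = -(2 * -x - β₀) by ring,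
      neg_neg, neg_neg]
    linear_combination hI - h

theorem norm_left_le_one (hF : IsTwoScalePrimitive β₀ β₁ c₀ c₁ F) (hβ : β₀ < β₁) {K : NNReal}
    (hlip : LipschitzWith K F) (hne : F ≠ 0) : ‖c₀‖ ≤ 1 := by
  by_contra! hc
  refine hne (hF.eq_zero_of_eqOn_Icc hβ.le fun x hx => ?_)
  have hzero := eq_zero_of_eq_mul_apply_two_mul (f := fun t => F (β₀ + t)) (s := β₁ - β₀)
    (K := K) hc
    (fun t ht₀ hts => by
      simpa [show 2 * (β₀ + t) - β₀ = β₀ + 2 * t by ring] using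
        hF.apply_eq_of_le_midpoint (x := β₀ + t) (by linarith))
    (fun t ht₀ => by
      simpa [hF.eq_zero_of_le β₀ le_rfl, abs_of_nonneg ht₀] using hlip.norm_sub_le (β₀ + t) β₀)
    (sub_nonneg.2 hx.1) (by linarith [hx.2])
  simpa using hzero

theorem norm_right_le_one (hF : IsTwoScalePrimitive β₀ β₁ c₀ c₁ F) (hβ : β₀ < β₁) {K : NNReal}
    (hlip : LipschitzWith K F) (hne : F ≠ 0) : ‖c₁‖ ≤ 1 := by
  refine (hF.reflect hβ.le).norm_left_le_one (by linarith)
    ((LipschitzWith.const _).sub (hlip.comp LipschitzWith.id.neg)) fun h => hne ?_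
  funext x
  have hx := congrFun h (-x)
  have hβ₀ := congrFun h (-β₀)
  simp only [neg_neg, Pi.zero_apply, hF.eq_zero_of_le β₀ le_rfl] at hx hβ₀ ⊢
  linear_combination hβ₀ - hx

theorem apply_right_ne_zero (hF : IsTwoScalePrimitive β₀ β₁ c₀ c₁ F)
    (hc₀ : ‖c₀‖ ≤ 1) (hc₁ : ‖c₁‖ ≤ 1) (hcont : Continuous F) (hne : F ≠ 0) : F β₁ ≠ 0 := by
  intro hI
  have hsupp : HasCompactSupport F := HasCompactSupport.intro (isCompact_Icc (a := β₀) (b := β₁))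
    fun x hx => by
      rcases not_and_or.1 hx with hx | hx
      · exact hF.eq_zero_of_le x (not_le.1 hx).le
      · exact (hF.eq_of_ge x (not_le.1 hx).le).trans hI
  refine hne (eq_zero_of_forall_norm_le_mul_norm (hcont.norm.bddAbove_range_of_hasCompactSupport
    hsupp.norm) (r := 1 / 2) (by norm_num) (by norm_num) fun x => ?_)
  rcases le_total x ((β₀ + β₁) / 2) with hx | hx
  · refine ⟨2 * x - β₀, ?_⟩
    rw [hF.apply_eq_of_le_midpoint hx, norm_mul, norm_div, Complex.norm_two]
    gcongr
  · refine ⟨2 * x - β₁, ?_⟩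
    rw [hF.twoScale x, hF.eq_of_ge (2 * x - β₀) (by linarith), hI, mul_zero, zero_add, norm_mul,
      norm_div, Complex.norm_two]
    gcongr

theorem coeffs_eq_one (hF : IsTwoScalePrimitive β₀ β₁ c₀ c₁ F) (hβ : β₀ < β₁) {K : NNReal}
    (hlip : LipschitzWith K F) (hne : F ≠ 0) : c₀ = 1 ∧ c₁ = 1 := by
  have hc₀ := hF.norm_left_le_one hβ hlip hne
  have hc₁ := hF.norm_right_le_one hβ hlip hne
  have hI := hF.apply_right_ne_zero hc₀ hc₁ hlip.continuous hne
  have hsum : c₀ + c₁ = (2 : ℝ) • (1 : ℂ) := by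
    have h := mul_right_cancel₀ hI ((hF.apply_right_eq hβ.le).symm.trans (one_mul _).symm)
    rw [Complex.real_smul, Complex.ofReal_ofNat]
    linear_combination 2 * h
  exact eq_of_norm_le_of_add_eq_two_smul (by simpa using hc₀) (by simpa using hc₁) hsum

end IsTwoScalePrimitive

/-- If a bounded, compactly supported, integrable `φ`, not a.e. zero, satisfies the
two-term two-scale difference equation with `λ = 2`, then `c₀ = 1` and `c₁ = 1`. -/
theorem two_term_two_scale_coeffs_eq_one_of_lam_eq_two
    (β₀ β₁ : ℝ) (hβ : β₀ < β₁) (c₀ c₁ : ℂ)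
    (φ : ℝ → ℂ) (hint : Integrable φ)
    (hsupp : ∃ R : ℝ, ∀ᵐ x : ℝ, R < |x| → φ x = 0)
    (hbdd : MemLp φ ⊤ volume)
    (hne : ¬ φ =ᵐ[volume] 0)
    (heq : ∀ᵐ x : ℝ, φ x = c₀ * φ (2 * x - β₀) + c₁ * φ (2 * x - β₁)) :
    c₀ = 1 ∧ c₁ = 1 := by
  have hφ := ae_eq_zero_of_notMem_Icc hβ.le heq hsupp
  have hΦ : IsTwoScalePrimitive β₀ β₁ c₀ c₁ fun x => ∫ t in Iic x, φ t :=
    { eq_zero_of_le := fun _ hx => integral_Iic_eq_zero_of_le hφ hx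
      eq_of_ge := fun _ hx => (integral_Iic_eq_integral_of_ge hφ hx).trans
        (integral_Iic_eq_integral_of_ge hφ le_rfl).symm
      twoScale := integral_Iic_twoScale hint heq }
  exact hΦ.coeffs_eq_one hβ (lipschitzWith_integral_Iic hint hbdd.ae_norm_le_toNNReal_eLpNorm_top)
    fun hΦ₀ => hne (ae_eq_zero_of_forall_integral_Iic_eq_zero hint (congrFun hΦ₀))
end
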